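/- arXiv:2203.07989 — 3 statements merged into one kernel-verified Lean document; each statement's English description precedes it below -/
import Mathlib

section
/- Let p ≥ 1, l ∈ ℕ, and for each i ∈ [l] let μ_i ∈ (0,∞)^m. Then the Rademacher complexity of the union of axis-aligned p-ellipses satisfies R(⋃_{i=1}^l E_p(μ_i)) = (1/m) · max_{i ∈ [l]} ‖μ_i‖_{p'}, where p' is the Hölder conjugate of p. In particular, the complexity is independent of the number l of ellipses in the union. -/
open Finset

noncomputable def sgn (b : Bool) : ℝ := if b then 1 else -1

/-- Rademacher complexity of a set of vectors `A ⊆ ℝ^m`. -/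
noncomputable def radComp (m : ℕ) (A : Set (Fin m → ℝ)) : ℝ :=
  (1 / m) * ((1 / 2 ^ m) *
    ∑ ε : Fin m → Bool, sSup ((fun a => ∑ k, sgn (ε k) * a k) '' A))

lemma sgn_mul_self (b : Bool) : sgn b * sgn b = 1 := by cases b <;> norm_num [sgn]

lemma abs_sgn (b : Bool) : |sgn b| = 1 := by cases b <;> norm_num [sgn]

lemma key (m : ℕ) (hm : 0 < m) (p : ℝ) (hp : 1 < p) (μ : Fin m → ℝ)
    (hμ : ∀ k, 0 < μ k) (ε : Fin m → Bool) :
    IsGreatest ((fun a => ∑ k, sgn (ε k) * a k) ''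
        {x : Fin m → ℝ | ∑ k, |x k| ^ p / μ k ^ p ≤ 1})
      ((∑ k, μ k ^ (p / (p - 1))) ^ ((p - 1) / p)) := by
  have hpq : p.HolderConjugate (p / (p - 1)) := Real.HolderConjugate.conjExponent hp
  set q : ℝ := p / (p - 1) with hq
  have hp0 : (0:ℝ) < p := hpq.pos
  have hq0 : (0:ℝ) < q := hpq.symm.pos
  have h1q : 1 / q = (p - 1) / p := by
    rw [hq, one_div_div]
  set S : ℝ := ∑ k, μ k ^ q with hSdef
  have hS : 0 < S := by
    apply Finset.sum_pos (fun k _ => Real.rpow_pos_of_pos (hμ k) q)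
    exact Finset.univ_nonempty_iff.mpr (Fin.pos_iff_nonempty.mp hm)
  have hSp : (0:ℝ) < S ^ (1 / p) := Real.rpow_pos_of_pos hS _
  constructor
  · -- attained at x k = sgn (ε k) * (μ k ^ q / S ^ (1/p))
    refine ⟨fun k => sgn (ε k) * (μ k ^ q / S ^ (1 / p)), ?_, ?_⟩
    · have habs : ∀ k, |sgn (ε k) * (μ k ^ q / S ^ (1 / p))| ^ p / μ k ^ p
          = μ k ^ q / S := by
        intro k
        have h1 : |sgn (ε k) * (μ k ^ q / S ^ (1 / p))| = μ k ^ q / S ^ (1 / p) := by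
          rw [abs_mul, abs_sgn, one_mul, abs_of_pos]
          exact div_pos (Real.rpow_pos_of_pos (hμ k) q) hSp
        have hqp : q * p - p = q := by
          have := hpq.symm.mul_eq_add; linarith
        rw [h1, Real.div_rpow (Real.rpow_nonneg (hμ k).le q) hSp.le,
          ← Real.rpow_mul (hμ k).le, ← Real.rpow_mul hS.le,
          one_div_mul_cancel hp0.ne', Real.rpow_one, div_right_comm,
          ← Real.rpow_sub (hμ k), hqp]
      simp only [Set.mem_setOf_eq]
      rw [Finset.sum_congr rfl (fun k _ => habs k), ← Finset.sum_div, ← hSdef,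
        div_self hS.ne']
    · have hval : ∀ k, sgn (ε k) * (sgn (ε k) * (μ k ^ q / S ^ (1 / p)))
          = μ k ^ q / S ^ (1 / p) := fun k => by
        rw [← mul_assoc, sgn_mul_self, one_mul]
      show (∑ k, sgn (ε k) * (sgn (ε k) * (μ k ^ q / S ^ (1 / p)))) = _
      rw [Finset.sum_congr rfl (fun k _ => hval k), ← Finset.sum_div, ← hSdef]
      rw [eq_comm, ← h1q]
      rw [eq_div_iff hSp.ne', ← Real.rpow_add hS]
      rw [show 1 / q + 1 / p = 1 from by
        rw [one_div, one_div, add_comm]; exact hpq.inv_add_inv_eq_one]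
      exact Real.rpow_one S
  · -- upper bound
    rintro y ⟨x, hx, rfl⟩
    have step1 : ∑ k, sgn (ε k) * x k ≤ ∑ k, |x k| := by
      apply Finset.sum_le_sum
      intro k _
      calc sgn (ε k) * x k ≤ |sgn (ε k) * x k| := le_abs_self _
        _ = |x k| := by rw [abs_mul, abs_sgn, one_mul]
    have step2 : ∑ k, |x k| ≤ S ^ ((p - 1) / p) := by
      have hx2 : ∀ k ∈ Finset.univ, |x k| = (|x k| / μ k) * μ k := fun k _ =>
        (div_mul_cancel₀ _ (hμ k).ne').symm
      rw [Finset.sum_congr rfl hx2]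
      have hold := Real.inner_le_Lp_mul_Lq_of_nonneg (s := Finset.univ)
        (f := fun k => |x k| / μ k) (g := μ) hpq
        (fun k _ => div_nonneg (abs_nonneg _) (hμ k).le) (fun k _ => (hμ k).le)
      have hfp : ∀ k ∈ Finset.univ, (|x k| / μ k) ^ p = |x k| ^ p / μ k ^ p :=
        fun k _ => Real.div_rpow (abs_nonneg _) (hμ k).le p
      rw [Finset.sum_congr rfl hfp] at hold
      calc ∑ k, (|x k| / μ k) * μ k
          ≤ (∑ k, |x k| ^ p / μ k ^ p) ^ (1 / p) * (∑ k, μ k ^ q) ^ (1 / q) := hold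
        _ ≤ 1 * S ^ ((p - 1) / p) := by
            rw [← hSdef, h1q]
            gcongr
            exact Real.rpow_le_one (Finset.sum_nonneg fun k _ => div_nonneg (Real.rpow_nonneg (abs_nonneg _) p) (Real.rpow_nonneg (hμ k).le p)) hx
              (one_div_nonneg.mpr hp0.le)
        _ = S ^ ((p - 1) / p) := one_mul _
    exact step1.trans step2

/-- The Rademacher complexity of a union of axis-aligned p-ellipses equals
`(1/m) · max_i ‖μ_i‖_{p'}`, independently of the number `l` of ellipses. -/
theorem stmt1 (m l : ℕ) (hm : 0 < m) (hl : 0 < l) (p : ℝ) (hp : 1 < p)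
    (μ : Fin l → Fin m → ℝ) (hμ : ∀ i k, 0 < μ i k) :
    radComp m (⋃ i : Fin l, {x : Fin m → ℝ | ∑ k, |x k| ^ p / (μ i k) ^ p ≤ 1}) =
      (1 / m) *
        Finset.univ.sup' (Finset.univ_nonempty_iff.mpr (Fin.pos_iff_nonempty.mp hl))
          (fun i => (∑ k, (μ i k) ^ (p / (p - 1))) ^ ((p - 1) / p)) := by
  have hne := Finset.univ_nonempty_iff.mpr (Fin.pos_iff_nonempty.mp hl)
  set V : Fin l → ℝ := fun i => (∑ k, (μ i k) ^ (p / (p - 1))) ^ ((p - 1) / p) with hV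
  set M : ℝ := Finset.univ.sup' hne V with hM
  have hsup : ∀ ε : Fin m → Bool,
      sSup ((fun a => ∑ k, sgn (ε k) * a k) ''
        (⋃ i : Fin l, {x : Fin m → ℝ | ∑ k, |x k| ^ p / (μ i k) ^ p ≤ 1})) = M := by
    intro ε
    rw [Set.image_iUnion]
    apply IsGreatest.csSup_eq
    constructor
    · obtain ⟨i0, _, hi0⟩ := Finset.exists_mem_eq_sup' hne V
      have := (key m hm p hp (μ i0) (hμ i0) ε).1
      exact Set.mem_iUnion.mpr ⟨i0, by rw [hM, hi0]; exact this⟩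
    · rintro y hy
      obtain ⟨i, hyi⟩ := Set.mem_iUnion.mp hy
      exact ((key m hm p hp (μ i) (hμ i) ε).2 hyi).trans
        (Finset.le_sup' V (Finset.mem_univ i))
  unfold radComp
  rw [Finset.sum_congr rfl (fun ε _ => hsup ε), Finset.sum_const, Finset.card_univ]
  have hcard : Fintype.card (Fin m → Bool) = 2 ^ m := by simp
  rw [hcard, nsmul_eq_mul]
  have h2 : (2:ℝ) ^ m ≠ 0 := by positivity
  push_cast
  rw [hM]
  field_simp
end

section
/- Let p ≥ 1, let l ∈ ℕ, and for each i ∈ [l] let V_i ∈ ℝ^{m×m} be an orthogonal matrix and Λ_i the diagonal matrix with positive diagonal entries μ_{i,1},...,μ_{i,m}. Define the rotated p-ellipse E_p^{V_i}(μ_i) = {x ∈ ℝ^m : Σ_{k=1}^m |⟨(V_i)_k, x⟩|^p / μ_{i,k}^p ≤ 1}, where (V_i)_k is the k-th column of V_i. Then the Rademacher complexity of the union satisfies R(⋃_{i=1}^l E_p^{V_i}(μ_i)) ≤ (1/m) max_{i∈[l]} ‖V_i Λ_i‖_{p→1}, where ‖M‖_{p→1} = sup_{‖u‖_p ≤ 1}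 ‖Mu‖_1 is the p-to-1 operator norm. -/
open Finset Matrix

/-- The p-to-1 operator norm `‖M‖_{p→1} = sup_{‖u‖_p ≤ 1} ‖Mu‖_1`. -/
noncomputable def pToOneNorm (m : ℕ) (p : ℝ) (M : Matrix (Fin m) (Fin m) ℝ) : ℝ :=
  sSup {y : ℝ | ∃ u : Fin m → ℝ, (∑ k, |u k| ^ p) ≤ 1 ∧ y = ∑ k, |M.mulVec u k|}

lemma pset_bdd (m : ℕ) (p : ℝ) (hp : 1 ≤ p) (M : Matrix (Fin m) (Fin m) ℝ) :
    BddAbove {y : ℝ | ∃ u : Fin m → ℝ, (∑ k, |u k| ^ p) ≤ 1 ∧ y = ∑ k, |M.mulVec u k|} := by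
  have hp0 : (0:ℝ) < p := lt_of_lt_of_le one_pos hp
  refine ⟨∑ j, ∑ k, |M j k|, ?_⟩
  rintro y ⟨u, hu, rfl⟩
  have hub : ∀ k, |u k| ≤ 1 := by
    intro k
    have h1 : |u k| ^ p ≤ 1 :=
      le_trans (Finset.single_le_sum (fun k _ => Real.rpow_nonneg (abs_nonneg _) p)
        (Finset.mem_univ k)) hu
    have h2 := Real.rpow_le_rpow (Real.rpow_nonneg (abs_nonneg _) p) h1
      (le_of_lt (by positivity : (0:ℝ) < 1/p))
    rwa [Real.one_rpow, ← Real.rpow_mul (abs_nonneg _),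
      mul_one_div_cancel hp0.ne', Real.rpow_one] at h2
  refine Finset.sum_le_sum fun j _ => ?_
  calc |M.mulVec u j| = |∑ k, M j k * u k| := by rw [Matrix.mulVec, dotProduct]
    _ ≤ ∑ k, |M j k * u k| := Finset.abs_sum_le_sum_abs _ _
    _ ≤ ∑ k, |M j k| := by
        refine Finset.sum_le_sum fun k _ => ?_
        rw [abs_mul]
        calc |M j k| * |u k| ≤ |M j k| * 1 :=
              mul_le_mul_of_nonneg_left (hub k) (abs_nonneg _)
          _ = |M j k| := mul_one _

lemma pnorm_nonneg (m : ℕ) (p : ℝ) (hp : 1 ≤ p) (M : Matrix (Fin m) (Fin m) ℝ) :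
    0 ≤ pToOneNorm m p M := by
  have hp0 : (0:ℝ) < p := lt_of_lt_of_le one_pos hp
  refine le_csSup (pset_bdd m p hp M) ⟨0, ?_, ?_⟩
  · simp [Real.zero_rpow hp0.ne']
  · simp [Matrix.mulVec_zero]

/-- The Rademacher complexity of a union of rotated p-ellipses
`E_p^{V_i}(μ_i) = {x : Σ_k |⟨(V_i)_k, x⟩|^p / μ_{i,k}^p ≤ 1}` is at most
`(1/m) · max_i ‖V_i Λ_i‖_{p→1}`. -/
theorem stmt11 (m l : ℕ) (hm : 0 < m) (hl : 0 < l) (p : ℝ) (hp : 1 ≤ p)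
    (V : Fin l → Matrix (Fin m) (Fin m) ℝ)
    (hV : ∀ i, (V i)ᵀ * V i = 1 ∧ V i * (V i)ᵀ = 1)
    (μ : Fin l → Fin m → ℝ) (hμ : ∀ i k, 0 < μ i k) :
    radComp m
        (⋃ i : Fin l,
          {x : Fin m → ℝ | ∑ k, |∑ j, V i j k * x j| ^ p / (μ i k) ^ p ≤ 1}) ≤
      (1 / m) *
        Finset.univ.sup' (Finset.univ_nonempty_iff.mpr (Fin.pos_iff_nonempty.mp hl))
          (fun i => pToOneNorm m p (V i * Matrix.diagonal (μ i))) := by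
  have hp0 : (0:ℝ) < p := lt_of_lt_of_le one_pos hp
  set ne : Finset.univ.Nonempty := Finset.univ_nonempty_iff.mpr (Fin.pos_iff_nonempty.mp hl)
  set B : ℝ := Finset.univ.sup' ne (fun i => pToOneNorm m p (V i * Matrix.diagonal (μ i)))
    with hBdef
  have hB0 : 0 ≤ B := by
    obtain ⟨i⟩ := Fin.pos_iff_nonempty.mp hl
    rw [hBdef]
    exact le_trans (pnorm_nonneg m p hp _)
      (Finset.le_sup' (fun i => pToOneNorm m p (V i * Matrix.diagonal (μ i)))
        (Finset.mem_univ i))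
  have key : ∀ ε : Fin m → Bool,
      sSup ((fun a => ∑ k, sgn (ε k) * a k) ''
        (⋃ i : Fin l,
          {x : Fin m → ℝ | ∑ k, |∑ j, V i j k * x j| ^ p / (μ i k) ^ p ≤ 1})) ≤ B := by
    intro ε
    refine Real.sSup_le ?_ hB0
    rintro y ⟨a, ha, rfl⟩
    obtain ⟨i, hai⟩ := Set.mem_iUnion.mp ha
    simp only [Set.mem_setOf_eq] at hai
    set u : Fin m → ℝ := fun k => (∑ j, V i j k * a j) / μ i k with hu
    have hunorm : (∑ k, |u k| ^ p) ≤ 1 := by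
      refine le_trans (le_of_eq (Finset.sum_congr rfl fun k _ => ?_)) hai
      rw [hu]
      rw [abs_div, abs_of_pos (hμ i k), Real.div_rpow (abs_nonneg _) (hμ i k).le]
    have hrep : ∀ j, a j = (V i * Matrix.diagonal (μ i)).mulVec u j := by
      intro j
      have horth : ∀ j', (∑ k, V i j k * V i j' k) = if j = j' then 1 else 0 := by
        intro j'
        have := congrFun (congrFun (hV i).2 j) j'
        rwa [Matrix.mul_apply, Matrix.one_apply] at this
      calc a j = ∑ j', (if j = j' then 1 else 0) * a j' := by
            simp
        _ = ∑ j', (∑ k, V i j k * V i j' k) * a j' := by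
            refine Finset.sum_congr rfl fun j' _ => by rw [horth j']
        _ = ∑ j', ∑ k, V i j k * V i j' k * a j' := by
            refine Finset.sum_congr rfl fun j' _ => Finset.sum_mul _ _ _
        _ = ∑ k, ∑ j', V i j k * V i j' k * a j' := Finset.sum_comm
        _ = ∑ k, V i j k * ∑ j', V i j' k * a j' := by
            refine Finset.sum_congr rfl fun k _ => ?_
            rw [Finset.mul_sum]
            exact Finset.sum_congr rfl fun j' _ => by ring
        _ = ∑ k, V i j k * μ i k * u k := by
            refine Finset.sum_congr rfl fun k _ => ?_
            rw [hu]
            rw [mul_assoc, mul_div_assoc', mul_comm (μ i k),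
              mul_div_assoc, div_self (hμ i k).ne', mul_one]
        _ = (V i * Matrix.diagonal (μ i)).mulVec u j := by
            rw [Matrix.mulVec, dotProduct]
            refine Finset.sum_congr rfl fun k _ => ?_
            rw [Matrix.mul_diagonal]
    calc (∑ k, sgn (ε k) * a k) ≤ ∑ k, |a k| := by
          refine Finset.sum_le_sum fun k _ => ?_
          rcases Bool.eq_false_or_eq_true (ε k) with h | h <;>
            simp [sgn, h, abs_le] <;> [skip; skip] <;> cases abs_cases (a k) <;> linarith
      _ = ∑ k, |(V i * Matrix.diagonal (μ i)).mulVec u k| := by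
          exact Finset.sum_congr rfl fun k _ => by rw [hrep k]
      _ ≤ pToOneNorm m p (V i * Matrix.diagonal (μ i)) :=
          le_csSup (pset_bdd m p hp _) ⟨u, hunorm, rfl⟩
      _ ≤ B := by
          rw [hBdef]
          exact Finset.le_sup' (fun i => pToOneNorm m p (V i * Matrix.diagonal (μ i)))
            (Finset.mem_univ i)
  have hsum : (∑ ε : Fin m → Bool,
      sSup ((fun a => ∑ k, sgn (ε k) * a k) ''
        (⋃ i : Fin l,
          {x : Fin m → ℝ | ∑ k, |∑ j, V i j k * x j| ^ p / (μ i k) ^ p ≤ 1}))) ≤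
      2 ^ m * B := by
    calc _ ≤ ∑ _ε : Fin m → Bool, B := Finset.sum_le_sum fun ε _ => key ε
      _ = 2 ^ m * B := by
          rw [Finset.sum_const, nsmul_eq_mul]
          congr 1
          simp [Fintype.card_fun]
  rw [radComp]
  have h1 : (0:ℝ) ≤ 1 / m := by positivity
  refine mul_le_mul_of_nonneg_left ?_ h1
  calc (1 / 2 ^ m : ℝ) * _ ≤ 1 / 2 ^ m * (2 ^ m * B) :=
        mul_le_mul_of_nonneg_left hsum (by positivity)
    _ = B := by field_simp
end

section
/- Let l ∈ ℕ, and for each i ∈ [l] let c_i ∈ ℝ^m, let V_i ∈ ℝ^{m×m} be orthogonal and Λ_i diagonal with positive diagonal entries μ_{i,k} forming the translated and rotated p-ellipse E_p(c_i, μ_i, V_i) = {x ∈ ℝ^m : Σ_{k=1}^m |⟨(V_i)_k, x − c_i⟩|^p / μ_{i,k}^p ≤ 1}. Then the Rademacher complexity of the union satisfies R(⋃_{i=1}^l E_p(c_i, μ_i, V_i)) ≤ (1/m) max_{i∈[l]} ‖V_i Λ_i‖_{p→1} + max_{i∈[l]} ‖c_i‖_2 · √(2 ln l) / m. -/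
open Finset Matrix

/-! The `sgn ε`-correlation of a point of the `i`-th ellipse splits into that of its offset `x - cᵢ`
from the centre and that of `cᵢ`. The offset is `VᵢΛᵢu` with `‖u‖_p ≤ 1`, so its correlation is at
most `‖VᵢΛᵢ‖_{p→1}` whatever the signs. The centres are `l` fixed vectors, and Massart's lemma
bounds the average of their largest correlation: by Jensen and `cosh x ≤ exp (x² / 2)`,
`exp (t · E max) ≤ Σᵢ E exp (t ⟨ε, cᵢ⟩) ≤ l · exp (t² B² / 2)` for `B = maxᵢ ‖cᵢ‖₂`, and optimizing
over `t > 0` gives `B √(2 ln l)`. -/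

section SignAverage

variable {m : ℕ}

/-- Expectation over a uniformly random sign vector `ε ∈ {-1, 1}ᵐ`, encoded through `sgn`. -/
noncomputable def signAvg (f : (Fin m → Bool) → ℝ) : ℝ := 1 / 2 ^ m * ∑ ε, f ε

lemma signAvg_mono {f g : (Fin m → Bool) → ℝ} (h : ∀ ε, f ε ≤ g ε) : signAvg f ≤ signAvg g := by
  unfold signAvg
  gcongr with ε
  exact h ε

lemma signAvg_const_add (P : ℝ) (g : (Fin m → Bool) → ℝ) :
    signAvg (fun ε => P + g ε) = P + signAvg g := by
  simp [signAvg, sum_add_distrib, mul_add]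

lemma signAvg_const_mul (t : ℝ) (g : (Fin m → Bool) → ℝ) :
    signAvg (fun ε => t * g ε) = t * signAvg g := by
  simp only [signAvg, ← mul_sum]
  ring

lemma signAvg_sum {ι : Type*} [Fintype ι] (f : ι → (Fin m → Bool) → ℝ) :
    signAvg (fun ε => ∑ i, f i ε) = ∑ i, signAvg (f i) := by
  simp only [signAvg, ← mul_sum]
  rw [sum_comm]

lemma exp_signAvg_le (f : (Fin m → Bool) → ℝ) :
    Real.exp (signAvg f) ≤ signAvg fun ε => Real.exp (f ε) := by
  have hw : ∑ _ε : Fin m → Bool, (1 / 2 ^ m : ℝ) = 1 := by simp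
  simpa [signAvg, smul_eq_mul, mul_sum] using
    convexOn_exp.map_sum_le (t := univ) (w := fun _ => (1 / 2 ^ m : ℝ)) (p := f)
      (fun _ _ => by positivity) hw (fun _ _ => Set.mem_univ _)

lemma signAvg_exp_sum_sgn_mul_le (a : Fin m → ℝ) :
    signAvg (fun ε => Real.exp (∑ k, sgn (ε k) * a k)) ≤ Real.exp ((∑ k, a k ^ 2) / 2) := by
  have hprod : ∑ ε : Fin m → Bool, Real.exp (∑ k, sgn (ε k) * a k) = ∏ k, 2 * Real.cosh (a k) :=
    calc _ = ∑ ε : Fin m → Bool, ∏ k, Real.exp (sgn (ε k) * a k) := by simp only [Real.exp_sum]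
      _ = ∏ k, ∑ b, Real.exp (sgn b * a k) :=
          (Fintype.prod_sum fun k b => Real.exp (sgn b * a k)).symm
      _ = ∏ k, 2 * Real.cosh (a k) := prod_congr rfl fun k _ => by
          simp [sgn, Real.cosh_eq]
          ring
  calc signAvg (fun ε => Real.exp (∑ k, sgn (ε k) * a k))
      = 1 / 2 ^ m * ∏ k, 2 * Real.cosh (a k) := by rw [signAvg, hprod]
    _ ≤ 1 / 2 ^ m * ∏ k, 2 * Real.exp (a k ^ 2 / 2) := by
        gcongr with k
        exact Real.cosh_le_exp_half_sq (a k)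
    _ = Real.exp ((∑ k, a k ^ 2) / 2) := by
        rw [prod_mul_distrib, prod_const, ← Real.exp_sum, sum_div, card_univ, Fintype.card_fin]
        field_simp

end SignAverage

lemma le_two_mul_sqrt_of_forall_le_div_add_mul {A L K : ℝ} (hL : 0 ≤ L) (hK : 0 ≤ K)
    (h : ∀ t > 0, A ≤ L / t + t * K) : A ≤ 2 * √(L * K) := by
  -- the optimal `t = √(L / K)` may be degenerate, so use it for `L + ε, K + ε` and let `ε → 0`
  have hε : ∀ ε > 0, A ≤ 2 * (√(L + ε) * √(K + ε)) := by
    intro ε hε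
    have ha : 0 < √(L + ε) := Real.sqrt_pos.2 (by linarith)
    have hb : 0 < √(K + ε) := Real.sqrt_pos.2 (by linarith)
    calc A ≤ L / (√(L + ε) / √(K + ε)) + √(L + ε) / √(K + ε) * K := h _ (div_pos ha hb)
      _ ≤ (L + ε) / (√(L + ε) / √(K + ε)) + √(L + ε) / √(K + ε) * (K + ε) := by
          gcongr <;> linarith
      _ = 2 * (√(L + ε) * √(K + ε)) := by
          field_simp
          rw [Real.sq_sqrt (by linarith), Real.sq_sqrt (by linarith)]
          ring
  have hlim : Filter.Tendsto (fun ε => 2 * (√(L + ε) * √(K + ε))) (nhdsWithin 0 (Set.Ioi 0))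
      (nhds (2 * √(L * K))) := by
    rw [Real.sqrt_mul hL]
    refine tendsto_nhdsWithin_of_tendsto_nhds ?_
    have : Continuous fun ε : ℝ => 2 * (√(L + ε) * √(K + ε)) := by fun_prop
    simpa using this.tendsto 0
  exact ge_of_tendsto hlim (eventually_nhdsWithin_of_forall hε)

section Massart

variable {ι : Type*} [Fintype ι] [Nonempty ι] {m : ℕ}

lemma signAvg_sup'_le_log_card_div_add (v : ι → Fin m → ℝ) {K : ℝ}
    (hK : ∀ i, ∑ k, v i k ^ 2 ≤ 2 * K) {t : ℝ} (ht : 0 < t) :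
    signAvg (fun ε => univ.sup' univ_nonempty fun i => ∑ k, sgn (ε k) * v i k)
      ≤ Real.log (Fintype.card ι) / t + t * K := by
  set G : (Fin m → Bool) → ℝ := fun ε => univ.sup' univ_nonempty fun i => ∑ k, sgn (ε k) * v i k
  have hmax : ∀ ε, Real.exp (t * G ε) ≤ ∑ i, Real.exp (∑ k, sgn (ε k) * (t * v i k)) := by
    intro ε
    obtain ⟨i, -, hi⟩ := exists_mem_eq_sup' univ_nonempty fun i => ∑ k, sgn (ε k) * v i k
    have : t * G ε = ∑ k, sgn (ε k) * (t * v i k) := by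
      simp only [G, hi, mul_sum]
      ring_nf
    rw [this]
    exact single_le_sum (f := fun i => Real.exp (∑ k, sgn (ε k) * (t * v i k)))
      (fun _ _ => (Real.exp_pos _).le) (mem_univ i)
  have hmgf : ∀ i, signAvg (fun ε => Real.exp (∑ k, sgn (ε k) * (t * v i k)))
      ≤ Real.exp (t ^ 2 * K) := fun i =>
    calc _ ≤ Real.exp ((∑ k, (t * v i k) ^ 2) / 2) := signAvg_exp_sum_sgn_mul_le _
      _ ≤ Real.exp (t ^ 2 * K) := by
          gcongr
          simp only [mul_pow, ← mul_sum]
          nlinarith [hK i, sq_nonneg t]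
  have hexp : Real.exp (t * signAvg G) ≤ Fintype.card ι * Real.exp (t ^ 2 * K) :=
    calc Real.exp (t * signAvg G) = Real.exp (signAvg fun ε => t * G ε) := by
          rw [signAvg_const_mul]
      _ ≤ signAvg fun ε => Real.exp (t * G ε) := exp_signAvg_le _
      _ ≤ signAvg fun ε => ∑ i, Real.exp (∑ k, sgn (ε k) * (t * v i k)) := signAvg_mono hmax
      _ = ∑ i, signAvg fun ε => Real.exp (∑ k, sgn (ε k) * (t * v i k)) := signAvg_sum _
      _ ≤ ∑ _i : ι, Real.exp (t ^ 2 * K) := sum_le_sum fun i _ => hmgf i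
      _ = Fintype.card ι * Real.exp (t ^ 2 * K) := by simp
  have hcard : (0 : ℝ) < Fintype.card ι := by exact_mod_cast Fintype.card_pos
  have hlog := Real.log_le_log (Real.exp_pos _) hexp
  rw [Real.log_exp, Real.log_mul hcard.ne' (Real.exp_pos _).ne', Real.log_exp] at hlog
  rw [div_add' _ _ _ ht.ne', le_div_iff₀ ht]
  nlinarith

lemma signAvg_sup'_le_massart (v : ι → Fin m → ℝ) {B : ℝ} (hB : ∀ i, √(∑ k, v i k ^ 2) ≤ B) :
    signAvg (fun ε => univ.sup' univ_nonempty fun i => ∑ k, sgn (ε k) * v i k)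
      ≤ B * √(2 * Real.log (Fintype.card ι)) := by
  have hB0 : 0 ≤ B := (Real.sqrt_nonneg _).trans (hB (Classical.arbitrary ι))
  have hK : ∀ i, ∑ k, v i k ^ 2 ≤ 2 * (B ^ 2 / 2) := fun i => by
    rw [mul_div_cancel₀ _ two_ne_zero, ← Real.sqrt_le_left hB0]
    exact hB i
  have hL : 0 ≤ Real.log (Fintype.card ι) := Real.log_natCast_nonneg _
  calc _ ≤ 2 * √(Real.log (Fintype.card ι) * (B ^ 2 / 2)) :=
        le_two_mul_sqrt_of_forall_le_div_add_mul hL (by positivity)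
          fun t ht => signAvg_sup'_le_log_card_div_add v hK ht
    _ = B * √(2 * Real.log (Fintype.card ι)) := by
        rw [show Real.log (Fintype.card ι) * (B ^ 2 / 2)
            = (B / 2) ^ 2 * (2 * Real.log (Fintype.card ι)) by ring,
          Real.sqrt_mul (sq_nonneg _), Real.sqrt_sq (by positivity)]
        ring

end Massart

section Ellipse

variable {m : ℕ} {p : ℝ}

lemma sgn_mul_le_abs (b : Bool) (a : ℝ) : sgn b * a ≤ |a| := by
  cases b
  · simpa [sgn] using neg_le_abs a
  · simpa [sgn] using le_abs_self a

/-- The paper's `E_p(c, μ, V)`: the inner sum is `⟨V_k, x - c⟩` for the `k`-th column `V_k`. -/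
def pEllipse (p : ℝ) (c : Fin m → ℝ) (V : Matrix (Fin m) (Fin m) ℝ) (μ : Fin m → ℝ) :
    Set (Fin m → ℝ) :=
  {x | ∑ k, |∑ j, V j k * (x j - c j)| ^ p / μ k ^ p ≤ 1}

lemma bddAbove_pToOneNorm_set (hp : 0 < p) (M : Matrix (Fin m) (Fin m) ℝ) :
    BddAbove {y : ℝ | ∃ u : Fin m → ℝ, (∑ k, |u k| ^ p) ≤ 1 ∧ y = ∑ k, |M.mulVec u k|} := by
  refine ⟨∑ k, ∑ j, |M k j|, ?_⟩
  rintro y ⟨u, hu, rfl⟩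
  have hu1 : ∀ j, |u j| ≤ 1 := fun j => by
    rw [← Real.rpow_le_rpow_iff (abs_nonneg _) zero_le_one hp, Real.one_rpow]
    exact (single_le_sum (fun k _ => by positivity) (mem_univ j)).trans hu
  refine sum_le_sum fun k _ => ?_
  calc |M.mulVec u k| = |∑ j, M k j * u j| := rfl
    _ ≤ ∑ j, |M k j * u j| := abs_sum_le_sum_abs _ _
    _ ≤ ∑ j, |M k j| := sum_le_sum fun j _ => by
        rw [abs_mul]
        exact mul_le_of_le_one_right (abs_nonneg _) (hu1 j)

lemma sum_abs_mulVec_le_pToOneNorm (hp : 0 < p) (M : Matrix (Fin m) (Fin m) ℝ)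
    {u : Fin m → ℝ} (hu : ∑ k, |u k| ^ p ≤ 1) :
    ∑ k, |M.mulVec u k| ≤ pToOneNorm m p M :=
  le_csSup (bddAbove_pToOneNorm_set hp M) ⟨u, hu, rfl⟩

lemma center_mem_pEllipse (hp : p ≠ 0) (c : Fin m → ℝ) (V : Matrix (Fin m) (Fin m) ℝ)
    (μ : Fin m → ℝ) : c ∈ pEllipse p c V μ := by
  simp [pEllipse, Real.zero_rpow hp]

lemma exists_mulVec_eq_sub_of_mem_pEllipse {c x μ : Fin m → ℝ} {V : Matrix (Fin m) (Fin m) ℝ}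
    (hV : V * Vᵀ = 1) (hμ : ∀ k, 0 < μ k) (hx : x ∈ pEllipse p c V μ) :
    ∃ u : Fin m → ℝ, ∑ k, |u k| ^ p ≤ 1 ∧ (V * diagonal μ) *ᵥ u = x - c := by
  have hcoord : ∀ k, (Vᵀ *ᵥ (x - c)) k = ∑ j, V j k * (x j - c j) := fun k => by
    simp [mulVec, dotProduct]
  refine ⟨fun k => (Vᵀ *ᵥ (x - c)) k / μ k, ?_, ?_⟩
  · refine le_of_eq_of_le (sum_congr rfl fun k _ => ?_) hx
    dsimp only
    rw [hcoord, abs_div, Real.div_rpow (abs_nonneg _) (abs_nonneg _), abs_of_pos (hμ k)]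
  · have hdiag : diagonal μ *ᵥ (fun k => (Vᵀ *ᵥ (x - c)) k / μ k) = Vᵀ *ᵥ (x - c) := by
      ext k
      simp [mulVec_diagonal, mul_div_cancel₀ _ (hμ k).ne']
    rw [← mulVec_mulVec, hdiag, mulVec_mulVec, hV, one_mulVec]

lemma sum_sgn_mul_le_of_mem_pEllipse (hp : 0 < p) {c x μ : Fin m → ℝ}
    {V : Matrix (Fin m) (Fin m) ℝ} (hV : V * Vᵀ = 1) (hμ : ∀ k, 0 < μ k)
    (hx : x ∈ pEllipse p c V μ) (ε : Fin m → Bool) :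
    ∑ k, sgn (ε k) * x k ≤ pToOneNorm m p (V * diagonal μ) + ∑ k, sgn (ε k) * c k := by
  obtain ⟨u, hu, hxc⟩ := exists_mulVec_eq_sub_of_mem_pEllipse hV hμ hx
  calc ∑ k, sgn (ε k) * x k = ∑ k, sgn (ε k) * (x - c) k + ∑ k, sgn (ε k) * c k := by
        rw [← sum_add_distrib]; simp [mul_sub]
    _ ≤ ∑ k, |((V * diagonal μ) *ᵥ u) k| + ∑ k, sgn (ε k) * c k := by
        rw [hxc]; gcongr with k; exact sgn_mul_le_abs _ _
    _ ≤ pToOneNorm m p (V * diagonal μ) + ∑ k, sgn (ε k) * c k := by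
        gcongr; exact sum_abs_mulVec_le_pToOneNorm hp _ hu

lemma sSup_image_iUnion_pEllipse_le {ι : Type*} [Fintype ι] [Nonempty ι] (hp : 0 < p)
    (c : ι → Fin m → ℝ) (V : ι → Matrix (Fin m) (Fin m) ℝ)
    (hV : ∀ i, V i * (V i)ᵀ = 1) (μ : ι → Fin m → ℝ) (hμ : ∀ i k, 0 < μ i k)
    (ε : Fin m → Bool) :
    sSup ((fun a => ∑ k, sgn (ε k) * a k) '' ⋃ i, pEllipse p (c i) (V i) (μ i)) ≤
      univ.sup' univ_nonempty (fun i => pToOneNorm m p (V i * diagonal (μ i))) +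
        univ.sup' univ_nonempty (fun i => ∑ k, sgn (ε k) * c i k) := by
  have hne : (⋃ i, pEllipse p (c i) (V i) (μ i)).Nonempty :=
    ⟨_, Set.mem_iUnion.2 ⟨Classical.arbitrary ι, center_mem_pEllipse hp.ne' _ _ _⟩⟩
  refine csSup_le (hne.image _) ?_
  rintro _ ⟨x, hx, rfl⟩
  obtain ⟨i, hxi⟩ := Set.mem_iUnion.1 hx
  calc ∑ k, sgn (ε k) * x k
      ≤ pToOneNorm m p (V i * diagonal (μ i)) + ∑ k, sgn (ε k) * c i k :=
        sum_sgn_mul_le_of_mem_pEllipse hp (hV i) (hμ i) hxi ε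
    _ ≤ _ := add_le_add (le_sup' (fun i => pToOneNorm m p (V i * diagonal (μ i))) (mem_univ i))
        (le_sup' (fun i => ∑ k, sgn (ε k) * c i k) (mem_univ i))

end Ellipse

theorem stmt13_general (m l : ℕ) (hl : 0 < l) (p : ℝ) (hp : 1 ≤ p)
    (c : Fin l → Fin m → ℝ)
    (V : Fin l → Matrix (Fin m) (Fin m) ℝ)
    (hV : ∀ i, (V i)ᵀ * V i = 1 ∧ V i * (V i)ᵀ = 1)
    (μ : Fin l → Fin m → ℝ) (hμ : ∀ i k, 0 < μ i k) :
    radComp m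
        (⋃ i : Fin l,
          {x : Fin m → ℝ |
            ∑ k, |∑ j, V i j k * (x j - c i j)| ^ p / (μ i k) ^ p ≤ 1}) ≤
      (1 / m) *
          Finset.univ.sup' (Finset.univ_nonempty_iff.mpr (Fin.pos_iff_nonempty.mp hl))
            (fun i => pToOneNorm m p (V i * Matrix.diagonal (μ i))) +
        (Finset.univ.sup' (Finset.univ_nonempty_iff.mpr (Fin.pos_iff_nonempty.mp hl))
            (fun i => Real.sqrt (∑ j, (c i j) ^ 2))) *
          Real.sqrt (2 * Real.log l) / m := by
  have : Nonempty (Fin l) := ⟨⟨0, hl⟩⟩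
  have hunion := sSup_image_iUnion_pEllipse_le (by linarith) c V (fun i => (hV i).2) μ hμ
  have hcenters := signAvg_sup'_le_massart c
    (B := univ.sup' univ_nonempty fun i => √(∑ j, c i j ^ 2)) fun i => by
      exact le_sup' (fun i => √(∑ j, c i j ^ 2)) (mem_univ i)
  rw [Fintype.card_fin] at hcenters
  calc radComp m (⋃ i, pEllipse p (c i) (V i) (μ i))
      = 1 / m * signAvg fun ε =>
          sSup ((fun a => ∑ k, sgn (ε k) * a k) '' ⋃ i, pEllipse p (c i) (V i) (μ i)) := rfl
    _ ≤ 1 / m * (univ.sup' univ_nonempty (fun i => pToOneNorm m p (V i * diagonal (μ i))) +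
          univ.sup' univ_nonempty (fun i => √(∑ j, c i j ^ 2)) * √(2 * Real.log l)) := by
        gcongr
        calc _ ≤ _ := signAvg_mono hunion
          _ = _ := signAvg_const_add _ _
          _ ≤ _ := by gcongr
    _ = _ := by ring

/-- Clustered sensitivity set: the Rademacher complexity of a union of `l`
translated and rotated p-ellipses is at most the complexity of the largest
centered ellipse plus `max_i ‖c_i‖_2 √(2 ln l) / m` for the centers. -/
theorem stmt13 (m l : ℕ) (hm : 0 < m) (hl : 0 < l) (p : ℝ) (hp : 1 ≤ p)
    (c : Fin l → Fin m → ℝ)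
    (V : Fin l → Matrix (Fin m) (Fin m) ℝ)
    (hV : ∀ i, (V i)ᵀ * V i = 1 ∧ V i * (V i)ᵀ = 1)
    (μ : Fin l → Fin m → ℝ) (hμ : ∀ i k, 0 < μ i k) :
    radComp m
        (⋃ i : Fin l,
          {x : Fin m → ℝ |
            ∑ k, |∑ j, V i j k * (x j - c i j)| ^ p / (μ i k) ^ p ≤ 1}) ≤
      (1 / m) *
          Finset.univ.sup' (Finset.univ_nonempty_iff.mpr (Fin.pos_iff_nonempty.mp hl))
            (fun i => pToOneNorm m p (V i * Matrix.diagonal (μ i))) +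
        (Finset.univ.sup' (Finset.univ_nonempty_iff.mpr (Fin.pos_iff_nonempty.mp hl))
            (fun i => Real.sqrt (∑ j, (c i j) ^ 2))) *
          Real.sqrt (2 * Real.log l) / m :=
  stmt13_general m l hl p hp c V hV μ hμ
end
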